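/- In the setting of Theorem 1, the function u₂ = g₀ · Σ_{odd n ≥ 1} (ω^n/n!) X^(n) satisfies (p u₂')'(x) + q(x) u₂(x) = ω² u₂(x) for all x ∈ (0,a), for every ω ∈ ℂ. -/

import Mathlib

open MeasureTheory Set Filter

/-- The sequence X̃^(n) of Theorem 1: X̃^(0) ≡ 1; for n ≥ 1,
X̃^(n)(x) = n ∫₀ˣ X̃^(n-1)(ξ) g₀²(ξ) dξ if n is odd, and
X̃^(n)(x) = n ∫₀ˣ X̃^(n-1)(ξ) g⁻²(ξ) dξ if n is even, where g² = p g₀². -/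
noncomputable def Ytilde (p g₀ : ℝ → ℂ) : ℕ → ℝ → ℂ
  | 0 => fun _ => 1
  | n + 1 => fun x => ((n + 1 : ℕ) : ℂ) *
      ∫ ξ in (0:ℝ)..x, Ytilde p g₀ n ξ *
        (if Even (n + 1) then (p ξ * g₀ ξ ^ 2)⁻¹ else g₀ ξ ^ 2)

/-- The sequence X^(n) of Theorem 1: X^(0) ≡ 1; for n ≥ 1,
X^(n)(x) = n ∫₀ˣ X^(n-1)(ξ) g⁻²(ξ) dξ if n is odd, and
X^(n)(x) = n ∫₀ˣ X^(n-1)(ξ) g₀²(ξ) dξ if n is even, where g² = p g₀². -/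
noncomputable def Yup (p g₀ : ℝ → ℂ) : ℕ → ℝ → ℂ
  | 0 => fun _ => 1
  | n + 1 => fun x => ((n + 1 : ℕ) : ℂ) *
      ∫ ξ in (0:ℝ)..x, Yup p g₀ n ξ *
        (if Even (n + 1) then g₀ ξ ^ 2 else (p ξ * g₀ ξ ^ 2)⁻¹)

/-- u₁ = g₀ Σ_{even n ≥ 0} (ω^n/n!) X̃^(n), summing over even indices n = 2k. -/
noncomputable def V₁ (p g₀ : ℝ → ℂ) (ω : ℂ) (x : ℝ) : ℂ :=
  g₀ x * ∑' k : ℕ, ω ^ (2 * k) / (Nat.factorial (2 * k) : ℂ) * Ytilde p g₀ (2 * k) x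

/-- u₂ = g₀ Σ_{odd n ≥ 1} (ω^n/n!) X^(n), summing over odd indices n = 2k+1. -/
noncomputable def V₂ (p g₀ : ℝ → ℂ) (ω : ℂ) (x : ℝ) : ℂ :=
  g₀ x * ∑' k : ℕ, ω ^ (2 * k + 1) / (Nat.factorial (2 * k + 1) : ℂ) * Yup p g₀ (2 * k + 1) x

/-!
Write `u₂ = g₀ S` with `S = Σₖ ω^(2k+1)/(2k+1)! X^(2k+1)` and `T = Σₖ ω^(2k)/(2k)! X^(2k)`.
Each `X^(n+1)` is `n + 1` times a primitive of `X^(n)` times the `(n+1)`-st weight, and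
`‖X^(n)(y)‖ ≤ (∫₀ʸ h)^n` for any `h` dominating the weights, so the series may be differentiated
termwise: `S' = ω T / (p g₀²)` and `T' = ω g₀² S`. Hence `p u₂' = p g₀' S + ω T / g₀`, and one more
differentiation together with `(p g₀')' = -q g₀` gives `(p u₂')' + q u₂ = ω² u₂`.

Two degenerate cases make `u₂` vanish near `x`. Since `0⁻¹ = 0`, the bound on `1 / g₀` allows
`g₀ ≡ 0`; by connectedness `g₀` vanishes either identically or nowhere on `(0, a)`. And if
`1 / (p g₀²)` is not integrable at `0`, every `X^(n)` with `n ≥ 1` is a junk integral equal to `0`.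
-/

open Topology

theorem integral_primitive_pow_mul {h : ℝ → ℝ} {a b : ℝ} (hi : IntervalIntegrable h volume a b)
    (hc : ContinuousOn h (Ioo (min a b) (max a b))) (n : ℕ) :
    ∫ x in a..b, (∫ t in a..x, h t) ^ n * h x = (∫ t in a..b, h t) ^ (n + 1) / (n + 1) := by
  set F := fun x => ∫ t in a..x, h t
  have hF : ContinuousOn F (uIcc a b) :=
    intervalIntegral.continuousOn_primitive_interval' hi left_mem_uIcc
  have hF' : ∀ x ∈ Ioo (min a b) (max a b), HasDerivWithinAt F (h x) (Ioi x) x := fun x hx =>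
    (intervalIntegral.integral_hasDerivAt_right
      (hi.mono_set (uIcc_subset_uIcc left_mem_uIcc (Ioo_subset_Icc_self hx)))
      (hc.stronglyMeasurableAtFilter isOpen_Ioo x hx)
      (hc.continuousAt (isOpen_Ioo.mem_nhds hx))).hasDerivWithinAt
  have := intervalIntegral.integral_comp_mul_deriv''' (g := fun u => u ^ n) hF hF'
    (continuous_pow n).continuousOn
    ((continuous_pow n).continuousOn.integrableOn_compact (isCompact_uIcc.image_of_continuousOn hF))
    ((intervalIntegrable_iff' (μ := volume)).1 (hi.continuousOn_mul (hF.pow n)))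
  simpa [F, integral_pow] using this

theorem intervalIntegrable_of_continuousOn_of_norm_le {E : Type*} [NormedAddCommGroup E]
    {f : ℝ → E} {a b M : ℝ} (hab : a ≤ b) (hc : ContinuousOn f (Ioc a b))
    (hM : ∀ x ∈ Ioc a b, ‖f x‖ ≤ M) : IntervalIntegrable f volume a b :=
  (intervalIntegrable_iff_integrableOn_Ioc_of_le hab).2
    ⟨hc.aestronglyMeasurable measurableSet_Ioc, .restrict_of_bounded (C := M) measure_Ioc_lt_top
      ((ae_restrict_iff' measurableSet_Ioc).2 (Eventually.of_forall hM))⟩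

theorem IsPreconnected.ne_zero_of_norm_inv_le {X 𝕜 : Type*} [TopologicalSpace X]
    [NormedDivisionRing 𝕜] {s : Set X} (hs : IsPreconnected s) {g : X → 𝕜} (hg : ContinuousOn g s)
    {C : ℝ} (hC : ∀ y ∈ s, ‖(g y)⁻¹‖ ≤ C) {x y : X} (hx : x ∈ s) (hy : y ∈ s) (hgx : g x ≠ 0) :
    g y ≠ 0 := by
  intro hgy
  have hCx : ‖g x‖⁻¹ ≤ C := by simpa using hC x hx
  have hC0 : 0 < C := (inv_pos.2 (norm_pos_iff.2 hgx)).trans_le hCx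
  obtain ⟨z, hz, hgz : ‖g z‖ = (2 * C)⁻¹⟩ : (2 * C)⁻¹ ∈ (fun z => ‖g z‖) '' s := by
    refine hs.intermediate_value hy hx hg.norm ⟨by simp [hgy, hC0.le], ?_⟩
    calc (2 * C)⁻¹ ≤ C⁻¹ := inv_anti₀ hC0 (by linarith)
      _ ≤ ‖g x‖ := inv_le_of_inv_le₀ (norm_pos_iff.2 hgx) hCx
  have := hC z hz
  rw [norm_inv, hgz, inv_inv] at this
  linarith

theorem pow_succ_div_factorial_mul (ω : ℂ) (m : ℕ) :
    ω ^ (m + 1) / ((m + 1).factorial : ℂ) * ((m + 1 : ℕ) : ℂ)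
      = ω * (ω ^ m / (m.factorial : ℂ)) := by
  rw [Nat.factorial_succ, Nat.cast_mul, pow_succ]
  field_simp

theorem summable_pow_div_factorial_mul {Y : ℕ → ℂ} {B : ℝ} (hY : ∀ n, ‖Y n‖ ≤ B ^ n) (ω : ℂ)
    {j : ℕ → ℕ} (hj : Function.Injective j) :
    Summable fun k => ω ^ j k / ((j k).factorial : ℂ) * Y (j k) := by
  refine .of_norm_bounded (g := fun k => (‖ω‖ * B) ^ j k / (j k).factorial)
    ((Real.summable_pow_div_factorial _).comp_injective hj) fun k => ?_
  rw [norm_mul, norm_div, norm_pow, Complex.norm_natCast, mul_pow, mul_div_right_comm]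
  exact mul_le_mul_of_nonneg_left (hY _) (by positivity)

theorem hasDerivAt_tsum_pow_div_factorial {Y r : ℕ → ℝ → ℂ} {t : Set ℝ} (ht : IsOpen t)
    (ht' : IsPreconnected t) {B M : ℝ}
    (hY : ∀ n z, z ∈ t → HasDerivAt (Y (n + 1)) ((n + 1 : ℕ) * (Y n z * r (n + 1) z)) z)
    (hYB : ∀ n z, z ∈ t → ‖Y n z‖ ≤ B ^ n) (hrM : ∀ n z, z ∈ t → ‖r n z‖ ≤ M) (ω : ℂ)
    {j : ℕ → ℕ} (hj : Function.Injective j) {y : ℝ} (hy : y ∈ t) :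
    HasDerivAt (fun z => ∑' k, ω ^ (j k + 1) / ((j k + 1).factorial : ℂ) * Y (j k + 1) z)
      (ω * ∑' k, ω ^ j k / ((j k).factorial : ℂ) * Y (j k) y * r (j k + 1) y) y := by
  have hderiv : ∀ k z, z ∈ t → HasDerivAt
      (fun z => ω ^ (j k + 1) / ((j k + 1).factorial : ℂ) * Y (j k + 1) z)
      (ω * (ω ^ j k / ((j k).factorial : ℂ) * Y (j k) z * r (j k + 1) z)) z := fun k z hz =>
    ((hY (j k) z hz).const_mul _).congr_deriv <| by
      rw [← mul_assoc, pow_succ_div_factorial_mul]; ring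
  have hbound : ∀ k z, z ∈ t →
      ‖ω * (ω ^ j k / ((j k).factorial : ℂ) * Y (j k) z * r (j k + 1) z)‖
        ≤ ‖ω‖ * M * ((‖ω‖ * B) ^ j k / (j k).factorial) := by
    intro k z hz
    calc _ = ‖ω‖ * (‖ω‖ ^ j k / (j k).factorial) * (‖Y (j k) z‖ * ‖r (j k + 1) z‖) := by
          simp only [norm_mul, norm_div, norm_pow, Complex.norm_natCast]; ring
      _ ≤ ‖ω‖ * (‖ω‖ ^ j k / (j k).factorial) * (B ^ j k * M) := by
          refine mul_le_mul_of_nonneg_left ?_ (by positivity)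
          exact mul_le_mul (hYB _ z hz) (hrM _ z hz) (norm_nonneg _)
            ((norm_nonneg _).trans (hYB _ z hz))
      _ = _ := by ring
  rw [← tsum_mul_left]
  exact hasDerivAt_tsum_of_isPreconnected
    (((Real.summable_pow_div_factorial (‖ω‖ * B)).comp_injective hj).mul_left (‖ω‖ * M))
    ht ht' hderiv hbound hy
    (summable_pow_div_factorial_mul (fun n => hYB n y hy) ω ((add_left_injective 1).comp hj)) hy

noncomputable def sturmLiouville (p q V : ℝ → ℂ) (x : ℝ) : ℂ :=
  deriv (fun y => p y * deriv V y) x + q x * V x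

theorem sturmLiouville_eq_mul_of_eventuallyEq_zero {p q V : ℝ → ℂ} {x : ℝ}
    (hV : V =ᶠ[𝓝 x] 0) (c : ℂ) : sturmLiouville p q V x = c * V x := by
  have hflux : (fun y => p y * deriv V y) =ᶠ[𝓝 x] 0 := by
    filter_upwards [hV.eventuallyEq_nhds] with y hy
    simp [hy.deriv_eq]
  simp [sturmLiouville, hflux.deriv_eq, hV.self_of_nhds]

theorem sturmLiouville_mul_of_hasDerivAt {p q g S T : ℝ → ℂ} {ω : ℂ} {x : ℝ}
    (hS : ∀ᶠ y in 𝓝 x, HasDerivAt S (ω * (p y * g y ^ 2)⁻¹ * T y) y)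
    (hT : HasDerivAt T (ω * g x ^ 2 * S x) x)
    (hg : ∀ᶠ y in 𝓝 x, HasDerivAt g (deriv g y) y)
    (hpg : DifferentiableAt ℝ (fun y => p y * deriv g y) x)
    (hp0 : ∀ᶠ y in 𝓝 x, p y ≠ 0) (hg0 : ∀ᶠ y in 𝓝 x, g y ≠ 0)
    (hsol : sturmLiouville p q g x = 0) :
    sturmLiouville p q (fun y => g y * S y) x = ω ^ 2 * (g x * S x) := by
  have hflux : (fun y => p y * deriv (fun y => g y * S y) y)
      =ᶠ[𝓝 x] fun y => p y * deriv g y * S y + ω * T y / g y := by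
    filter_upwards [hS, hg, hp0, hg0] with y hSy hgy hpy hgy0
    rw [HasDerivAt.deriv (f := fun y => g y * S y) (hgy.mul hSy)]
    field_simp
  have hderiv : HasDerivAt (fun y => p y * deriv g y * S y + ω * T y / g y) _ x :=
    (hpg.hasDerivAt.mul hS.self_of_nhds).add ((hT.const_mul ω).div hg.self_of_nhds hg0.self_of_nhds)
  rw [sturmLiouville, hflux.deriv_eq, hderiv.deriv]
  have hpx := hp0.self_of_nhds
  have hgx := hg0.self_of_nhds
  field_simp
  rw [sturmLiouville] at hsol
  linear_combination (g x ^ 2 * S x) * hsol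

noncomputable def iterPrim (r : ℕ → ℝ → ℂ) : ℕ → ℝ → ℂ
  | 0 => fun _ => 1
  | n + 1 => fun x => ((n + 1 : ℕ) : ℂ) * ∫ ξ in (0:ℝ)..x, iterPrim r n ξ * r (n + 1) ξ

namespace iterPrim

variable {r : ℕ → ℝ → ℂ} {h : ℝ → ℝ} {b : ℝ}

theorem continuousOn (hb : 0 ≤ b) (hr : ∀ n, IntervalIntegrable (r n) volume 0 b) (n : ℕ) :
    ContinuousOn (iterPrim r n) (Icc 0 b) := by
  induction n with
  | zero => exact continuousOn_const
  | succ n ih =>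
    rw [← uIcc_of_le hb] at ih ⊢
    exact continuousOn_const.mul <| intervalIntegral.continuousOn_primitive_interval'
      ((hr (n + 1)).continuousOn_mul ih) left_mem_uIcc

theorem intervalIntegrable_mul (hb : 0 ≤ b) (hr : ∀ n, IntervalIntegrable (r n) volume 0 b)
    (n : ℕ) {y : ℝ} (hy : y ∈ Icc 0 b) :
    IntervalIntegrable (fun ξ => iterPrim r n ξ * r (n + 1) ξ) volume 0 y := by
  have hsub : uIcc 0 y ⊆ uIcc 0 b := uIcc_subset_uIcc left_mem_uIcc (by rwa [uIcc_of_le hb])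
  refine ((hr (n + 1)).mono_set hsub).continuousOn_mul ((continuousOn hb hr n).mono ?_)
  rwa [← uIcc_of_le hb]

theorem hasDerivAt_succ (hb : 0 ≤ b) (hr : ∀ n, IntervalIntegrable (r n) volume 0 b)
    (hrc : ∀ n, ContinuousOn (r n) (Ioo 0 b)) (n : ℕ) {y : ℝ} (hy : y ∈ Ioo 0 b) :
    HasDerivAt (iterPrim r (n + 1)) ((n + 1 : ℕ) * (iterPrim r n y * r (n + 1) y)) y := by
  have hc : ContinuousOn (fun ξ => iterPrim r n ξ * r (n + 1) ξ) (Ioo 0 b) :=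
    ((continuousOn hb hr n).mono Ioo_subset_Icc_self).mul (hrc (n + 1))
  exact (intervalIntegral.integral_hasDerivAt_right
    (intervalIntegrable_mul hb hr n (Ioo_subset_Icc_self hy))
    (hc.stronglyMeasurableAtFilter isOpen_Ioo _ hy)
    (hc.continuousAt (isOpen_Ioo.mem_nhds hy))).const_mul _

theorem norm_le_pow_integral (hb : 0 ≤ b) (hr : ∀ n, IntervalIntegrable (r n) volume 0 b)
    (hrh : ∀ n ξ, ‖r n ξ‖ ≤ h ξ) (hh : IntervalIntegrable h volume 0 b)
    (hhc : ContinuousOn h (Ioo 0 b)) (n : ℕ) {y : ℝ} (hy : y ∈ Icc 0 b) :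
    ‖iterPrim r n y‖ ≤ (∫ t in (0:ℝ)..y, h t) ^ n := by
  induction n generalizing y with
  | zero => simp [iterPrim]
  | succ n ih =>
    have hsub : uIcc 0 y ⊆ uIcc 0 b := uIcc_subset_uIcc left_mem_uIcc (by rwa [uIcc_of_le hb])
    have hhy : IntervalIntegrable h volume 0 y := hh.mono_set hsub
    have hF : ContinuousOn (fun ξ => ∫ t in (0:ℝ)..ξ, h t) (uIcc 0 y) :=
      intervalIntegral.continuousOn_primitive_interval' hhy left_mem_uIcc
    have hpt : ∀ ξ ∈ Icc 0 y, ‖iterPrim r n ξ * r (n + 1) ξ‖ ≤ (∫ t in (0:ℝ)..ξ, h t) ^ n * h ξ :=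
      fun ξ hξ => (norm_mul_le _ _).trans <| mul_le_mul (ih ⟨hξ.1, hξ.2.trans hy.2⟩) (hrh _ _)
        (norm_nonneg _) (pow_nonneg (intervalIntegral.integral_nonneg hξ.1
          fun t _ => (norm_nonneg _).trans (hrh 0 t)) n)
    calc ‖iterPrim r (n + 1) y‖
        = (n + 1) * ‖∫ ξ in (0:ℝ)..y, iterPrim r n ξ * r (n + 1) ξ‖ := by
          simp only [iterPrim, norm_mul, Complex.norm_natCast]; push_cast; rfl
      _ ≤ (n + 1) * ∫ ξ in (0:ℝ)..y, (∫ t in (0:ℝ)..ξ, h t) ^ n * h ξ := by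
          gcongr
          exact (intervalIntegral.norm_integral_le_integral_norm hy.1).trans <|
            intervalIntegral.integral_mono_on hy.1 (intervalIntegrable_mul hb hr n hy).norm
              (hhy.continuousOn_mul (hF.pow n)) hpt
      _ = (∫ t in (0:ℝ)..y, h t) ^ (n + 1) := by
          rw [integral_primitive_pow_mul hhy (hhc.mono ?_) n]
          · field_simp
          · simp only [min_eq_left hy.1, max_eq_right hy.1]
            exact Ioo_subset_Ioo_right hy.2

theorem norm_le_pow_integral_right (hb : 0 ≤ b) (hr : ∀ n, IntervalIntegrable (r n) volume 0 b)
    (hrh : ∀ n ξ, ‖r n ξ‖ ≤ h ξ) (hh : IntervalIntegrable h volume 0 b)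
    (hhc : ContinuousOn h (Ioo 0 b)) (n : ℕ) {y : ℝ} (hy : y ∈ Icc 0 b) :
    ‖iterPrim r n y‖ ≤ (∫ t in (0:ℝ)..b, h t) ^ n := by
  have hh0 : ∀ ξ, 0 ≤ h ξ := fun ξ => (norm_nonneg _).trans (hrh 0 ξ)
  refine (norm_le_pow_integral hb hr hrh hh hhc n hy).trans (pow_le_pow_left₀
    (intervalIntegral.integral_nonneg hy.1 fun ξ _ => hh0 ξ) ?_ n)
  exact intervalIntegral.integral_mono_interval le_rfl hy.1 hy.2
    (Eventually.of_forall hh0) hh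

theorem hasDerivAt_tsum_pow_div_factorial (hb : 0 ≤ b)
    (hr : ∀ n, IntervalIntegrable (r n) volume 0 b)
    (hrc : ∀ n, ContinuousOn (r n) (Ioo 0 b)) (hrh : ∀ n ξ, ‖r n ξ‖ ≤ h ξ)
    (hh : IntervalIntegrable h volume 0 b) (hhc : ContinuousOn h (Ioo 0 b)) (ω : ℂ)
    {j : ℕ → ℕ} (hj : Function.Injective j) {y : ℝ} (hy : y ∈ Ioo 0 b) :
    HasDerivAt (fun z => ∑' k, ω ^ (j k + 1) / ((j k + 1).factorial : ℂ) * iterPrim r (j k + 1) z)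
      (ω * ∑' k, ω ^ j k / ((j k).factorial : ℂ) * iterPrim r (j k) y * r (j k + 1) y) y := by
  obtain ⟨ε, hε, hball⟩ := Metric.eventually_nhds_iff_ball.1 <|
    (isOpen_Ioo.eventually_mem hy).and <|
      (hhc.continuousAt (isOpen_Ioo.mem_nhds hy)).eventually_lt_const (lt_add_one (h y))
  exact _root_.hasDerivAt_tsum_pow_div_factorial Metric.isOpen_ball (convex_ball y ε).isPreconnected
    (fun n z hz => hasDerivAt_succ hb hr hrc n (hball z hz).1)
    (fun n z hz => norm_le_pow_integral_right hb hr hrh hh hhc n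
      (Ioo_subset_Icc_self (hball z hz).1))
    (fun n z hz => (hrh n z).trans (hball z hz).2.le) ω hj (Metric.mem_ball_self hε)

theorem eqOn_zero_of_not_intervalIntegrable
    (hrc : ContinuousOn (r 1) (Ioc 0 b)) (hr : ¬IntervalIntegrable (r 1) volume 0 b) (n : ℕ) :
    EqOn (iterPrim r (n + 1)) 0 (Icc 0 b) := by
  induction n with
  | zero =>
    intro y hy
    rcases hy.1.eq_or_lt with rfl | hy0
    · simp [iterPrim]
    · refine mul_eq_zero_of_right _ (intervalIntegral.integral_undef fun hi => hr ?_)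
      refine (by simpa [iterPrim] using hi : IntervalIntegrable (r 1) volume 0 y).trans ?_
      exact (hrc.mono (Icc_subset_Ioc_iff hy.2 |>.2 ⟨hy0, le_rfl⟩)).intervalIntegrable_of_Icc hy.2
  | succ n ih =>
    intro y hy
    refine mul_eq_zero_of_right _ ?_
    rw [intervalIntegral.integral_congr (g := fun _ => 0) fun ξ hξ => ?_,
      intervalIntegral.integral_zero]
    rw [uIcc_of_le hy.1] at hξ
    simp [ih ⟨hξ.1, hξ.2.trans hy.2⟩]

end iterPrim

noncomputable def oddSeries (Y : ℕ → ℝ → ℂ) (ω : ℂ) (y : ℝ) : ℂ :=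
  ∑' k : ℕ, ω ^ (2 * k + 1) / (Nat.factorial (2 * k + 1) : ℂ) * Y (2 * k + 1) y

noncomputable def evenSeries (Y : ℕ → ℝ → ℂ) (ω : ℂ) (y : ℝ) : ℂ :=
  ∑' k : ℕ, ω ^ (2 * k) / (Nat.factorial (2 * k) : ℂ) * Y (2 * k) y

namespace iterPrim

variable {r : ℕ → ℝ → ℂ} {b : ℝ} (hb : 0 ≤ b) (hr : ∀ n, IntervalIntegrable (r n) volume 0 b)
  (hrc : ∀ n, ContinuousOn (r n) (Ioo 0 b)) (hper : Function.Periodic r 2)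

include hper in
theorem norm_le_of_periodic (n : ℕ) (ξ : ℝ) : ‖r n ξ‖ ≤ ‖r 0 ξ‖ + ‖r 1 ξ‖ := by
  rw [← hper.map_mod_nat n]
  rcases Nat.mod_two_eq_zero_or_one n with h | h <;> rw [h] <;> simp

include hb hr hrc hper

theorem hasDerivAt_tsum_of_periodic (ω : ℂ) {j : ℕ → ℕ} (hj : Function.Injective j) {y : ℝ}
    (hy : y ∈ Ioo 0 b) :
    HasDerivAt (fun z => ∑' k, ω ^ (j k + 1) / ((j k + 1).factorial : ℂ) * iterPrim r (j k + 1) z)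
      (ω * ∑' k, ω ^ j k / ((j k).factorial : ℂ) * iterPrim r (j k) y * r (j k + 1) y) y :=
  hasDerivAt_tsum_pow_div_factorial hb hr hrc (norm_le_of_periodic hper)
    ((hr 0).norm.add (hr 1).norm) ((hrc 0).norm.add (hrc 1).norm) ω hj hy

theorem hasDerivAt_oddSeries (ω : ℂ) {y : ℝ} (hy : y ∈ Ioo 0 b) :
    HasDerivAt (oddSeries (iterPrim r) ω) (ω * r 1 y * evenSeries (iterPrim r) ω y) y := by
  have hodd : ∀ k, r (2 * k + 1) = r 1 := fun k => by
    rw [← hper.map_mod_nat]; congr 1; omega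
  have := hasDerivAt_tsum_of_periodic hb hr hrc hper ω (j := (2 * ·))
    (mul_right_injective₀ two_ne_zero) hy
  simp only [hodd, tsum_mul_right] at this
  exact this.congr_deriv (by rw [evenSeries]; ring)

theorem hasDerivAt_evenSeries (ω : ℂ) {y : ℝ} (hy : y ∈ Ioo 0 b) :
    HasDerivAt (evenSeries (iterPrim r) ω) (ω * r 0 y * oddSeries (iterPrim r) ω y) y := by
  have heven : ∀ k, r (2 * k + 1 + 1) = r 0 := fun k => by
    rw [← hper.map_mod_nat]; congr 1; omega
  have := (hasDerivAt_tsum_of_periodic hb hr hrc hper ω (j := (2 * · + 1))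
    ((add_left_injective 1).comp (mul_right_injective₀ two_ne_zero)) hy).const_add 1
  simp only [heven, tsum_mul_right] at this
  refine (this.congr_deriv (by rw [oddSeries]; ring)).congr_of_eventuallyEq ?_
  filter_upwards [isOpen_Ioo.mem_nhds hy] with z hz
  rw [evenSeries, Summable.tsum_eq_zero_add]
  · simp [iterPrim, mul_add]
  · exact summable_pow_div_factorial_mul (fun n => norm_le_pow_integral_right hb hr
      (norm_le_of_periodic hper) ((hr 0).norm.add (hr 1).norm) ((hrc 0).norm.add (hrc 1).norm) n
      (Ioo_subset_Icc_self hz)) ω (mul_right_injective₀ two_ne_zero)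

end iterPrim

noncomputable def yupWeight (p g₀ : ℝ → ℂ) (n : ℕ) (ξ : ℝ) : ℂ :=
  if Even n then g₀ ξ ^ 2 else (p ξ * g₀ ξ ^ 2)⁻¹

theorem Yup_eq_iterPrim (p g₀ : ℝ → ℂ) : Yup p g₀ = iterPrim (yupWeight p g₀) := by
  funext n
  induction n with
  | zero => rfl
  | succ n ih => simp only [Yup, iterPrim, yupWeight, ih]

theorem yupWeight_periodic (p g₀ : ℝ → ℂ) : Function.Periodic (yupWeight p g₀) 2 := fun n => by
  funext ξ
  simp [yupWeight, Nat.even_add]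

theorem continuousOn_yupWeight {p g₀ : ℝ → ℂ} {s : Set ℝ} (hp : ContinuousOn p s)
    (hg : ContinuousOn g₀ s) (hp0 : ∀ y ∈ s, p y ≠ 0) (hg0 : ∀ y ∈ s, g₀ y ≠ 0) (n : ℕ) :
    ContinuousOn (yupWeight p g₀ n) s := by
  show ContinuousOn (fun ξ => yupWeight p g₀ n ξ) s
  by_cases hn : Even n <;> simp only [yupWeight, hn, if_true, if_false]
  · exact hg.pow 2
  · exact (hp.mul (hg.pow 2)).inv₀ fun y hy => mul_ne_zero (hp0 y hy) (pow_ne_zero 2 (hg0 y hy))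

theorem sturmLiouville_V₂_of_intervalIntegrable {a b x : ℝ} {p q g₀ : ℝ → ℂ} (ω : ℂ)
    (hp : ContDiffOn ℝ 1 p (Ioo 0 a)) (hp0 : ∀ y ∈ Ioo 0 a, p y ≠ 0)
    (hg : ContDiffOn ℝ 2 g₀ (Ioo 0 a)) (hg0 : ∀ y ∈ Ioo 0 a, g₀ y ≠ 0)
    (hx : x ∈ Ioo 0 b) (hba : b ≤ a) (hr : ∀ n, IntervalIntegrable (yupWeight p g₀ n) volume 0 b)
    (hsol : sturmLiouville p q g₀ x = 0) :
    sturmLiouville p q (V₂ p g₀ ω) x = ω ^ 2 * V₂ p g₀ ω x := by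
  have hb : 0 ≤ b := hx.1.le.trans hx.2.le
  have hsub : Ioo 0 b ⊆ Ioo 0 a := Ioo_subset_Ioo_right hba
  have hnhds : ∀ᶠ y in 𝓝 x, y ∈ Ioo 0 b := isOpen_Ioo.eventually_mem hx
  have hrc : ∀ n, ContinuousOn (yupWeight p g₀ n) (Ioo 0 b) := fun n =>
    (continuousOn_yupWeight hp.continuousOn hg.continuousOn hp0 hg0 n).mono hsub
  have hper := yupWeight_periodic p g₀
  have hdg : ContDiffOn ℝ 1 (deriv g₀) (Ioo 0 a) :=
    ((contDiffOn_succ_iff_deriv_of_isOpen (n := 1) isOpen_Ioo).1 hg).2.2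
  have hV : V₂ p g₀ ω = fun y => g₀ y * oddSeries (iterPrim (yupWeight p g₀)) ω y := by
    rw [← Yup_eq_iterPrim]; rfl
  rw [hV]
  refine sturmLiouville_mul_of_hasDerivAt (T := evenSeries (iterPrim (yupWeight p g₀)) ω) ?_ ?_
    ?_ ?_ (hnhds.mono fun y hy => hp0 y (hsub hy)) (hnhds.mono fun y hy => hg0 y (hsub hy)) hsol
  · filter_upwards [hnhds] with y hy
    simpa [yupWeight] using iterPrim.hasDerivAt_oddSeries hb hr hrc hper ω hy
  · simpa [yupWeight] using iterPrim.hasDerivAt_evenSeries hb hr hrc hper ω hx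
  · filter_upwards [hnhds] with y hy
    exact (hg.contDiffAt (isOpen_Ioo.mem_nhds (hsub hy))).differentiableAt
      two_ne_zero |>.hasDerivAt
  · exact ((hp.contDiffAt (isOpen_Ioo.mem_nhds (hsub hx))).differentiableAt one_ne_zero).mul
      ((hdg.contDiffAt (isOpen_Ioo.mem_nhds (hsub hx))).differentiableAt one_ne_zero)

theorem stmt_15_general
    (a : ℝ) (p q g₀ : ℝ → ℂ)
    (hp : ContDiffOn ℝ 1 p (Set.Ioo 0 a))
    (hp0 : ∀ x ∈ Set.Icc 0 a, p x ≠ 0)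
    (hg : ContDiffOn ℝ 2 g₀ (Set.Ioo 0 a))
    (hgsol : ∀ x ∈ Set.Ioo 0 a, deriv (fun y => p y * deriv g₀ y) x + q x * g₀ x = 0)
    (hgb : ∃ C : ℝ, ∀ x ∈ Set.Icc 0 a, ‖g₀ x‖ ≤ C ∧ ‖(g₀ x)⁻¹‖ ≤ C)
    (ω : ℂ)
    :
    ∀ x ∈ Set.Ioo 0 a,
      deriv (fun y => p y * deriv (V₂ p g₀ ω) y) x + q x * V₂ p g₀ ω x
        = ω ^ 2 * V₂ p g₀ ω x := by
  intro x hx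
  obtain ⟨C, hC⟩ := hgb
  by_cases hvan : ∃ y ∈ Ioo 0 a, g₀ y = 0
  · obtain ⟨y, hy, hgy⟩ := hvan
    refine sturmLiouville_eq_mul_of_eventuallyEq_zero ?_ _
    filter_upwards [isOpen_Ioo.mem_nhds hx] with z hz
    have hgz : g₀ z = 0 := not_not.1 fun h => isPreconnected_Ioo.ne_zero_of_norm_inv_le
      hg.continuousOn (fun y hy => (hC y (Ioo_subset_Icc_self hy)).2) hz hy h hgy
    simp [V₂, hgz]
  push Not at hvan
  obtain ⟨b, hxb, hba⟩ := exists_between hx.2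
  have hIoc : Ioc 0 b ⊆ Ioo 0 a := Ioc_subset_Ioo_right hba
  have hrc := continuousOn_yupWeight hp.continuousOn hg.continuousOn
    (fun y hy => hp0 y (Ioo_subset_Icc_self hy)) hvan
  by_cases hi : IntervalIntegrable (yupWeight p g₀ 1) volume 0 b
  · refine sturmLiouville_V₂_of_intervalIntegrable ω hp (fun y hy => hp0 y (Ioo_subset_Icc_self hy))
      hg hvan ⟨hx.1, hxb⟩ hba.le (fun n => ?_) (hgsol x hx)
    rw [← (yupWeight_periodic p g₀).map_mod_nat n]
    rcases Nat.mod_two_eq_zero_or_one n with hn | hn <;> rw [hn]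
    · refine intervalIntegrable_of_continuousOn_of_norm_le (M := C ^ 2) (hx.1.trans hxb).le
        ((hrc 0).mono hIoc) fun y hy => ?_
      simpa [yupWeight] using
        pow_le_pow_left₀ (norm_nonneg _) (hC y (Ioo_subset_Icc_self (hIoc hy))).1 2
    · exact hi
  · refine sturmLiouville_eq_mul_of_eventuallyEq_zero ?_ _
    filter_upwards [Ioo_mem_nhds hx.1 hxb] with z hz
    have hY : ∀ k, iterPrim (yupWeight p g₀) (2 * k + 1) z = 0 := fun k =>
      iterPrim.eqOn_zero_of_not_intervalIntegrable ((hrc 1).mono hIoc) hi (2 * k)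
        (Ioo_subset_Icc_self hz)
    simp [V₂, Yup_eq_iterPrim, hY]

/-- in the setting of Theorem 1, u₂ = g₀ Σ_{odd n} (ω^n/n!) X^(n)
satisfies (p u₂')'(x) + q(x) u₂(x) = ω² u₂(x) for all x ∈ (0,a) and every ω ∈ ℂ. -/
theorem stmt_15
    (a : ℝ) (ha : 0 < a) (p q g₀ : ℝ → ℂ)
    (hp : ContDiffOn ℝ 1 p (Set.Ioo 0 a))
    (hpb : ∃ C : ℝ, ∀ x ∈ Set.Icc 0 a, ‖p x‖ ≤ C)
    (hp0 : ∀ x ∈ Set.Icc 0 a, p x ≠ 0)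
    (hg : ContDiffOn ℝ 2 g₀ (Set.Ioo 0 a))
    (hgsol : ∀ x ∈ Set.Ioo 0 a, deriv (fun y => p y * deriv g₀ y) x + q x * g₀ x = 0)
    (hgb : ∃ C : ℝ, ∀ x ∈ Set.Icc 0 a, ‖g₀ x‖ ≤ C ∧ ‖(g₀ x)⁻¹‖ ≤ C)
    (ω : ℂ)
    :
    ∀ x ∈ Set.Ioo 0 a,
      deriv (fun y => p y * deriv (V₂ p g₀ ω) y) x + q x * V₂ p g₀ ω x
        = ω ^ 2 * V₂ p g₀ ω x :=
  stmt_15_general a p q g₀ hp hp0 hg hgsol hgb ω
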